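/- arXiv:1302.4679 — 5 statements merged into one kernel-verified Lean document; each statement's English description precedes it below -/
import Mathlib

section
/- Let ξ be a positive random variable with continuous distribution, and F a cumulative distribution function with finite first moment against ξ. Among all random variables X with distribution F, the choice X* = F^{-1}(1 − F_ξ(ξ)) minimizes E[ξX]. That is, for any X ~ F, E[ξ X*] ≤ E[ξ X]. -/
/-!
Write `ν = ξ · P` and `U = F_ξ(ξ)`; continuity of `F_ξ` makes `{U = 1}` null. Off that event
`X* ≤ t` as soon as `1 - U ≤ F(t)`, so `{s < X*}` lies in the `ξ`-sublevel set `{U < P(X > s)}`,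
whose `P`-mass is at most `P(X > s)`. By the bathtub principle (among sets of at most a given
`P`-mass, sublevel sets of `ξ` carry the least `ν`-mass), `ν(s < X*) ≤ ν(s < X)`; symmetrically
`ν(X ≤ s) ≤ ν(X* ≤ s)`. Integrating these tail inequalities (layer cake) compares the positive
and negative parts of `E[ξ X*] = ∫ X* dν` and `E[ξ X] = ∫ X dν`.
-/

open MeasureTheory Set Filter
open scoped ENNReal
open ProbabilityTheory

section Bathtub

variable {Ω : Type*} [MeasurableSpace Ω] {μ : Measure Ω} {f : Ω → ℝ≥0∞} {s t : Set Ω}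

theorem measure_sdiff_le_measure_sdiff (hs : MeasurableSet s) (ht : MeasurableSet t)
    (h : μ s ≤ μ t) (hfin : μ (s ∩ t) ≠ ∞) : μ (s \ t) ≤ μ (t \ s) := by
  rw [← ENNReal.add_le_add_iff_left hfin, measure_inter_add_sdiff _ ht, inter_comm,
    measure_inter_add_sdiff _ hs]
  exact h

theorem withDensity_apply_le_of_sdiff (hs : MeasurableSet s) (ht : MeasurableSet t) {q : ℝ≥0∞}
    (hfs : ∀ ω ∈ s \ t, f ω ≤ q) (hft : ∀ ω ∈ t \ s, q ≤ f ω)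
    (h : μ (s \ t) ≤ μ (t \ s)) :
    μ.withDensity f s ≤ μ.withDensity f t := by
  have hst : μ.withDensity f (s \ t) ≤ q * μ (s \ t) := by
    rw [withDensity_apply _ (hs.diff ht), ← setLIntegral_const]
    exact setLIntegral_mono' (hs.diff ht) hfs
  have hts : q * μ (t \ s) ≤ μ.withDensity f (t \ s) := by
    rw [withDensity_apply _ (ht.diff hs), ← setLIntegral_const]
    exact setLIntegral_mono' (ht.diff hs) hft
  calc μ.withDensity f s = μ.withDensity f (t ∩ s) + μ.withDensity f (s \ t) := by
        rw [inter_comm, measure_inter_add_sdiff s ht]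
    _ ≤ μ.withDensity f (t ∩ s) + μ.withDensity f (t \ s) := by
        grw [hst, mul_le_mul_right h q, hts]
    _ = μ.withDensity f t := measure_inter_add_sdiff t hs

variable [IsFiniteMeasure μ]

theorem withDensity_apply_le_of_sublevel (hs : MeasurableSet s) (ht : MeasurableSet t)
    (hf : ∀ ω ∈ s, ∀ ω' ∉ s, f ω ≤ f ω') (h : μ s ≤ μ t) :
    μ.withDensity f s ≤ μ.withDensity f t :=
  withDensity_apply_le_of_sdiff hs ht (q := ⨆ ω ∈ s, f ω)
    (fun ω hω => le_iSup₂ (f := fun ω _ => f ω) ω hω.1)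
    (fun ω' hω' => iSup₂_le fun ω hω => hf ω hω ω' hω'.2)
    (measure_sdiff_le_measure_sdiff hs ht h (measure_ne_top _ _))

theorem withDensity_apply_le_of_superlevel (hs : MeasurableSet s) (ht : MeasurableSet t)
    (hf : ∀ ω ∉ t, ∀ ω' ∈ t, f ω ≤ f ω') (h : μ s ≤ μ t) :
    μ.withDensity f s ≤ μ.withDensity f t :=
  withDensity_apply_le_of_sdiff hs ht (q := ⨅ ω ∈ t, f ω)
    (fun ω hω => le_iInf₂ fun ω' hω' => hf ω hω.2 ω' hω')
    (fun ω hω => iInf₂_le (f := fun ω _ => f ω) ω hω.1)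
    (measure_sdiff_le_measure_sdiff hs ht h (measure_ne_top _ _))

end Bathtub

section LayerCake

variable {Ω : Type*} [MeasurableSpace Ω] {ν : Measure Ω} {f g : Ω → ℝ}

theorem lintegral_ofReal_eq_lintegral_meas_lt (hf : AEMeasurable f ν) :
    ∫⁻ ω, ENNReal.ofReal (f ω) ∂ν = ∫⁻ t in Ioi 0, ν {ω | t < f ω} := by
  have h := lintegral_eq_lintegral_meas_lt ν (ae_of_all _ fun ω => le_max_right (f ω) 0)
    (hf.max aemeasurable_const)
  simp only [ENNReal.ofReal_max, ENNReal.ofReal_zero, max_zero] at h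
  rw [h]
  refine setLIntegral_congr_fun measurableSet_Ioi fun t ht => ?_
  simp [not_lt.2 (le_of_lt (mem_Ioi.1 ht))]

theorem lintegral_ofReal_eq_lintegral_meas_le (hf : AEMeasurable f ν) :
    ∫⁻ ω, ENNReal.ofReal (f ω) ∂ν = ∫⁻ t in Ioi 0, ν {ω | t ≤ f ω} := by
  have h := lintegral_eq_lintegral_meas_le ν (ae_of_all _ fun ω => le_max_right (f ω) 0)
    (hf.max aemeasurable_const)
  simp only [ENNReal.ofReal_max, ENNReal.ofReal_zero, max_zero] at h
  rw [h]
  refine setLIntegral_congr_fun measurableSet_Ioi fun t ht => ?_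
  simp [not_le.2 (mem_Ioi.1 ht)]

theorem integral_le_integral_of_tails (hf : Integrable f ν) (hg : Integrable g ν)
    (hlt : ∀ t, ν {ω | t < f ω} ≤ ν {ω | t < g ω})
    (hle : ∀ t, ν {ω | g ω ≤ t} ≤ ν {ω | f ω ≤ t}) :
    ∫ ω, f ω ∂ν ≤ ∫ ω, g ω ∂ν := by
  have hpos : ∫⁻ ω, .ofReal (f ω) ∂ν ≤ ∫⁻ ω, .ofReal (g ω) ∂ν := by
    rw [lintegral_ofReal_eq_lintegral_meas_lt hf.aemeasurable,
      lintegral_ofReal_eq_lintegral_meas_lt hg.aemeasurable]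
    exact lintegral_mono fun t => hlt t
  have hneg : ∫⁻ ω, .ofReal (-g ω) ∂ν ≤ ∫⁻ ω, .ofReal (-f ω) ∂ν := by
    rw [lintegral_ofReal_eq_lintegral_meas_le (f := fun ω => -g ω) hg.neg.aemeasurable,
      lintegral_ofReal_eq_lintegral_meas_le (f := fun ω => -f ω) hf.neg.aemeasurable]
    refine lintegral_mono fun t => ?_
    simpa only [le_neg] using hle (-t)
  rw [integral_eq_lintegral_pos_part_sub_lintegral_neg_part hf,
    integral_eq_lintegral_pos_part_sub_lintegral_neg_part hg]
  exact sub_le_sub (ENNReal.toReal_mono hg.lintegral_lt_top.ne hpos)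
    (ENNReal.toReal_mono hf.neg.lintegral_lt_top.ne hneg)

end LayerCake

namespace ProbabilityTheory

theorem cdf_map_apply {Ω : Type*} [MeasurableSpace Ω] {P : Measure Ω} [IsProbabilityMeasure P]
    {Z : Ω → ℝ} (hZ : Measurable Z) (x : ℝ) :
    cdf (P.map Z) x = (P {ω | Z ω ≤ x}).toReal := by
  have := Measure.isProbabilityMeasure_map (μ := P) hZ.aemeasurable
  rw [cdf_eq_real, map_measureReal_apply hZ measurableSet_Iic]
  rfl

variable {μ : Measure ℝ}

/-- For `p ≤ 0` the set is all of `ℝ` and for `p > 1` it is empty; in both cases `sInf` returns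
the junk value `0`. -/
noncomputable def quantile (μ : Measure ℝ) (p : ℝ) : ℝ := sInf {t | p ≤ cdf μ t}

theorem quantile_le {p t : ℝ} (hp : 0 < p) (h : p ≤ cdf μ t) : quantile μ p ≤ t := by
  obtain ⟨x₀, hx₀⟩ := ((tendsto_cdf_atBot μ).eventually (gt_mem_nhds hp)).exists
  refine csInf_le ⟨x₀, fun y hy => ?_⟩ h
  by_contra! hyx
  exact (hy.trans (monotone_cdf μ hyx.le)).not_gt hx₀

variable [IsProbabilityMeasure μ]

theorem ofReal_one_sub_cdf (x : ℝ) : ENNReal.ofReal (1 - cdf μ x) = μ (Ioi x) := by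
  have h := (cdf μ).measure_Ioi (tendsto_cdf_atTop μ) x
  rw [measure_cdf] at h
  exact h.symm

theorem measure_Ici_of_continuous_cdf (hμ : Continuous (cdf μ)) (x : ℝ) :
    μ (Ici x) = ENNReal.ofReal (1 - cdf μ x) := by
  have h := (cdf μ).measure_Ici (tendsto_cdf_atTop μ) x
  rwa [measure_cdf, hμ.continuousWithinAt.leftLim_eq] at h

theorem measure_setOf_cdf_le_le (hμ : Continuous (cdf μ)) (v : ℝ) :
    μ {x | cdf μ x ≤ v} ≤ ENNReal.ofReal v := by
  set S := {x | cdf μ x ≤ v}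
  rcases S.eq_empty_or_nonempty with hS | hS
  · simp [hS]
  by_cases hbdd : BddAbove S
  · have hmem : sSup S ∈ S := (isClosed_le hμ continuous_const).csSup_mem hS hbdd
    calc μ S ≤ μ (Iic (sSup S)) := measure_mono fun x hx => le_csSup hbdd hx
      _ = ENNReal.ofReal (cdf μ (sSup S)) := (ofReal_cdf μ _).symm
      _ ≤ ENNReal.ofReal v := ENNReal.ofReal_le_ofReal hmem
  · have hv : 1 ≤ v := le_of_tendsto' (tendsto_cdf_atTop μ) fun x => by
      obtain ⟨y, hy, hxy⟩ := not_bddAbove_iff.1 hbdd x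
      exact (monotone_cdf μ hxy.le).trans hy
    calc μ S ≤ 1 := prob_le_one
      _ ≤ ENNReal.ofReal v := by rw [← ENNReal.ofReal_one]; exact ENNReal.ofReal_le_ofReal hv

theorem measure_setOf_le_cdf_le (hμ : Continuous (cdf μ)) (v : ℝ) :
    μ {x | v ≤ cdf μ x} ≤ ENNReal.ofReal (1 - v) := by
  set S := {x | v ≤ cdf μ x}
  rcases S.eq_empty_or_nonempty with hS | hS
  · simp [hS]
  by_cases hbdd : BddBelow S
  · have hmem : sInf S ∈ S := (isClosed_le continuous_const hμ).csInf_mem hS hbdd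
    calc μ S ≤ μ (Ici (sInf S)) := measure_mono fun x hx => csInf_le hbdd hx
      _ = ENNReal.ofReal (1 - cdf μ (sInf S)) := measure_Ici_of_continuous_cdf hμ _
      _ ≤ ENNReal.ofReal (1 - v) :=
          ENNReal.ofReal_le_ofReal (by linarith [show v ≤ _ from hmem])
  · have hv : v ≤ 0 := ge_of_tendsto' (tendsto_cdf_atBot μ) fun x => by
      obtain ⟨y, hy, hyx⟩ := not_bddBelow_iff.1 hbdd x
      exact hy.trans (monotone_cdf μ hyx.le)
    calc μ S ≤ 1 := prob_le_one
      _ ≤ ENNReal.ofReal (1 - v) := by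
        rw [← ENNReal.ofReal_one]; exact ENNReal.ofReal_le_ofReal (by linarith)

end ProbabilityTheory

section CostEfficiency

variable {Ω : Type*} [MeasurableSpace Ω] {P : Measure Ω}

theorem integral_withDensity_ofReal {ξ : Ω → ℝ} (hξ : Measurable ξ)
    (hξ0 : ∀ ω, 0 ≤ ξ ω) (Y : Ω → ℝ) :
    ∫ ω, Y ω ∂P.withDensity (fun ω => ENNReal.ofReal (ξ ω)) = ∫ ω, ξ ω * Y ω ∂P := by
  rw [integral_withDensity_eq_integral_toReal_smul hξ.ennreal_ofReal
    (ae_of_all _ fun _ => ENNReal.ofReal_lt_top)]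
  simp only [ENNReal.toReal_ofReal (hξ0 _), smul_eq_mul]

theorem integrable_withDensity_ofReal_iff {ξ : Ω → ℝ} (hξ : Measurable ξ)
    (hξ0 : ∀ ω, 0 ≤ ξ ω) {Y : Ω → ℝ} :
    Integrable Y (P.withDensity fun ω => ENNReal.ofReal (ξ ω)) ↔
      Integrable (fun ω => ξ ω * Y ω) P := by
  rw [integrable_withDensity_iff_integrable_smul' hξ.ennreal_ofReal
    (ae_of_all _ fun _ => ENNReal.ofReal_lt_top)]
  simp only [ENNReal.toReal_ofReal (hξ0 _), smul_eq_mul]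

/-- The paper's `X* = F⁻¹(1 - F_ξ(ξ))`, where `F` is the cdf of `μ`. -/
noncomputable def countermonotonePayoff (P : Measure Ω) (ξ : Ω → ℝ) (μ : Measure ℝ) :
    Ω → ℝ :=
  fun ω => quantile μ (1 - cdf (P.map ξ) (ξ ω))

theorem countermonotonePayoff_le {ξ : Ω → ℝ} {μ : Measure ℝ} {ω : Ω} {t : ℝ}
    (hω : cdf (P.map ξ) (ξ ω) ≠ 1) (h : 1 - cdf μ t ≤ cdf (P.map ξ) (ξ ω)) :
    countermonotonePayoff P ξ μ ω ≤ t :=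
  quantile_le (sub_pos.2 ((cdf_le_one _ _).lt_of_ne hω)) (by linarith)

variable [IsProbabilityMeasure P] {ξ X : Ω → ℝ}

local notation "ν" => P.withDensity fun ω => ENNReal.ofReal (ξ ω)

theorem measure_setOf_cdf_comp_le_le (hξ : Measurable ξ) (hcont : Continuous (cdf (P.map ξ)))
    (v : ℝ) : P {ω | cdf (P.map ξ) (ξ ω) ≤ v} ≤ ENNReal.ofReal v := by
  have := Measure.isProbabilityMeasure_map (μ := P) hξ.aemeasurable
  have h := measure_setOf_cdf_le_le hcont v
  rwa [Measure.map_apply hξ (measurableSet_le hcont.measurable measurable_const)] at h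

theorem ae_cdf_comp_ne_one (hξ : Measurable ξ) (hcont : Continuous (cdf (P.map ξ))) :
    ∀ᵐ ω ∂P, cdf (P.map ξ) (ξ ω) ≠ 1 := by
  have := Measure.isProbabilityMeasure_map (μ := P) hξ.aemeasurable
  have h := measure_setOf_le_cdf_le hcont 1
  rw [sub_self, ENNReal.ofReal_zero, nonpos_iff_eq_zero,
    Measure.map_apply hξ (measurableSet_le measurable_const hcont.measurable)] at h
  exact ae_iff.2 (measure_mono_null (fun ω hω => ge_of_eq (not_not.1 hω)) h)

theorem withDensity_setOf_lt_countermonotonePayoff_le (hξ : Measurable ξ) (hX : Measurable X)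
    (hcont : Continuous (cdf (P.map ξ))) (s : ℝ) :
    ν {ω | s < countermonotonePayoff P ξ (P.map X) ω} ≤ ν {ω | s < X ω} := by
  set G := cdf (P.map ξ)
  set u := 1 - cdf (P.map X) s
  have hsub : {ω | s < countermonotonePayoff P ξ (P.map X) ω} ≤ᵐ[ν] {ω | G (ξ ω) < u} := by
    filter_upwards [(withDensity_absolutelyContinuous P _).ae_le (ae_cdf_comp_ne_one hξ hcont)]
      with ω hω1 hω
    by_contra h
    exact (countermonotonePayoff_le hω1 (by linarith [not_lt.1 h])).not_gt hω
  have hP : P {ω | G (ξ ω) < u} ≤ P {ω | s < X ω} := by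
    have := Measure.isProbabilityMeasure_map (μ := P) hX.aemeasurable
    calc P {ω | G (ξ ω) < u} ≤ P {ω | G (ξ ω) ≤ u} :=
          measure_mono fun ω (hω : G (ξ ω) < u) => hω.le
      _ ≤ ENNReal.ofReal u := measure_setOf_cdf_comp_le_le hξ hcont u
      _ = P {ω | s < X ω} := by
          rw [ofReal_one_sub_cdf, Measure.map_apply hX measurableSet_Ioi]; rfl
  refine (measure_mono_ae hsub).trans (withDensity_apply_le_of_sublevel
    (measurableSet_lt (hcont.measurable.comp hξ) measurable_const)
    (measurableSet_lt measurable_const hX)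
    (fun ω hω ω' hω' => ENNReal.ofReal_le_ofReal
      (le_of_not_gt fun h => hω' ((monotone_cdf _ h.le).trans_lt hω))) hP)

theorem withDensity_setOf_le_le_countermonotonePayoff (hξ : Measurable ξ) (hX : Measurable X)
    (hcont : Continuous (cdf (P.map ξ))) (s : ℝ) :
    ν {ω | X ω ≤ s} ≤ ν {ω | countermonotonePayoff P ξ (P.map X) ω ≤ s} := by
  set G := cdf (P.map ξ)
  set v := 1 - cdf (P.map X) s
  have hP : P {ω | X ω ≤ s} ≤ P {ω | v < G (ξ ω)} := by
    have := Measure.isProbabilityMeasure_map (μ := P) hX.aemeasurable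
    have hGm : MeasurableSet {ω | G (ξ ω) ≤ v} :=
      measurableSet_le (hcont.measurable.comp hξ) measurable_const
    calc P {ω | X ω ≤ s} = ENNReal.ofReal (1 - v) := by
          rw [sub_sub_cancel, ofReal_cdf, Measure.map_apply hX measurableSet_Iic]; rfl
      _ = 1 - ENNReal.ofReal v := by
          rw [ENNReal.ofReal_sub _ (sub_nonneg.2 (cdf_le_one _ _)), ENNReal.ofReal_one]
      _ ≤ 1 - P {ω | G (ξ ω) ≤ v} :=
          tsub_le_tsub_left (measure_setOf_cdf_comp_le_le hξ hcont v) 1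
      _ = P {ω | v < G (ξ ω)} := by
          rw [← prob_compl_eq_one_sub hGm]; simp only [compl_ofPred, not_le]
  have hsub : {ω | v < G (ξ ω)} ≤ᵐ[ν] {ω | countermonotonePayoff P ξ (P.map X) ω ≤ s} := by
    filter_upwards [(withDensity_absolutelyContinuous P _).ae_le (ae_cdf_comp_ne_one hξ hcont)]
      with ω hω1 (hω : v < G (ξ ω))
    exact countermonotonePayoff_le hω1 (by linarith)
  refine (withDensity_apply_le_of_superlevel (measurableSet_le hX measurable_const)
    (measurableSet_lt measurable_const (hcont.measurable.comp hξ))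
    (fun ω hω ω' hω' => ENNReal.ofReal_le_ofReal
      (le_of_not_gt fun h => hω (hω'.trans_le (monotone_cdf _ h.le)))) hP).trans
    (measure_mono_ae hsub)

end CostEfficiency

/-- Cost-efficiency: among all payoffs with distribution `F`, the
anti-monotonic payoff `X* = F⁻¹(1 − F_ξ(ξ))` minimizes the cost `E[ξ X]`. -/
theorem cost_efficiency
    {Ω : Type*} [MeasurableSpace Ω] (P : Measure Ω) [IsProbabilityMeasure P]
    (ξ X : Ω → ℝ) (hξm : Measurable ξ) (hXm : Measurable X) (hξpos : ∀ ω, 0 < ξ ω)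
    (hξcont : Continuous (fun x => (P {ω | ξ ω ≤ x}).toReal))
    (F : ℝ → ℝ) (hXF : ∀ x, F x = (P {ω | X ω ≤ x}).toReal)
    (Xstar : Ω → ℝ)
    (hXstar : ∀ ω, Xstar ω =
      sInf {t : ℝ | 1 - (P {ω' | ξ ω' ≤ ξ ω}).toReal ≤ F t})
    (hint1 : Integrable (fun ω => ξ ω * X ω) P)
    (hint2 : Integrable (fun ω => ξ ω * Xstar ω) P) :
    ∫ ω, ξ ω * Xstar ω ∂P ≤ ∫ ω, ξ ω * X ω ∂P := by
  have hG : ∀ x, (P {ω | ξ ω ≤ x}).toReal = cdf (P.map ξ) x :=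
    fun x => (cdf_map_apply hξm x).symm
  have hF : F = cdf (P.map X) := funext fun x => (hXF x).trans (cdf_map_apply hXm x).symm
  have hcont : Continuous (cdf (P.map ξ)) := by simpa only [hG] using hξcont
  have hXstar' : Xstar = countermonotonePayoff P ξ (P.map X) := funext fun ω => by
    rw [hXstar, hG, hF]; rfl
  have hξ0 : ∀ ω, 0 ≤ ξ ω := fun ω => (hξpos ω).le
  subst hXstar'
  rw [← integrable_withDensity_ofReal_iff hξm hξ0] at hint1 hint2
  rw [← integral_withDensity_ofReal hξm hξ0, ← integral_withDensity_ofReal hξm hξ0]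
  exact integral_le_integral_of_tails hint2 hint1
    (withDensity_setOf_lt_countermonotonePayoff_le hξm hXm hcont)
    (withDensity_setOf_le_le_countermonotonePayoff hξm hXm hcont)
end

section
/- Let F be a strictly increasing continuous cdf on an interval (a,b) and let F_{ξ_T} be the cdf of a positive random variable ξ_T with positive density on (0,∞). Fix c ∈ (a,b) with F(c) > 0 and define U(x) = ∫_c^x F_{ξ_T}^{-1}(1 − F(y)) dy for x ∈ (a,b). Then U is continuously differentiable, strictly increasing, and strictly concave on (a,b), with U'(x) = F_{ξ_T}^{-1}(1 − F(x)), lim_{x→a+} U'(x) = +∞, and lim_{x→b−} U'(x) = 0. -/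
open MeasureTheory Set Filter Topology

/-!
The quantile function of a cdf that is continuous and increases strictly from `0` to `1` on
`(0, ∞)` is its inverse there: a continuous, strictly increasing bijection `(0, 1) → (0, ∞)`,
tending to `0` at `0` and to `∞` at `1`. Composed with `x ↦ 1 - F x`, which decreases from `1`
to `0` on `(a, b)`, it becomes a continuous, positive, strictly decreasing function, so by the
fundamental theorem of calculus its primitive `U` is strictly increasing and strictly concave.
-/

/-- The cdf of a random variable on `(0, ∞)` whose law charges every nonempty open interval
of `(0, ∞)` and has no atoms. -/
structure IsPositiveCDF (G : ℝ → ℝ) : Prop where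
  continuous : Continuous G
  eq_zero_of_nonpos : ∀ t ≤ 0, G t = 0
  strictMonoOn : StrictMonoOn G (Ici 0)
  tendsto_atTop : Tendsto G atTop (𝓝 1)

/-- Only meaningful for `p ∈ (0, 1)`: otherwise the set is empty or unbounded below, and
`sInf` returns the junk value `0`. -/
noncomputable def quantile (G : ℝ → ℝ) (p : ℝ) : ℝ := sInf {t | p ≤ G t}

section Density

variable {f G : ℝ → ℝ} (hG : ∀ x, G x = ∫ t in Iic x, f t)
include hG

theorem integrableOn_Iic_of_tendsto_ne_zero {l : ℝ} (hl : l ≠ 0)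
    (hGl : Tendsto G atTop (𝓝 l)) (x : ℝ) : IntegrableOn f (Iic x) := by
  by_contra hx
  have hG0 : ∀ y ≥ x, G y = 0 := fun y hy => by
    rw [hG]
    exact integral_undef fun h => hx (IntegrableOn.mono_set h (Iic_subset_Iic.2 hy))
  exact hl (tendsto_nhds_unique hGl
    (tendsto_const_nhds.congr' (eventually_atTop.2 ⟨x, fun y hy => (hG0 y hy).symm⟩)))

theorem IsPositiveCDF.of_density (hfpos : ∀ t > 0, 0 < f t) (hfzero : ∀ t ≤ 0, f t = 0)
    (hG1 : Tendsto G atTop (𝓝 1)) : IsPositiveCDF G := by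
  have hint := integrableOn_Iic_of_tendsto_ne_zero hG one_ne_zero hG1
  have hii : ∀ x y : ℝ, IntervalIntegrable f volume x y := fun x y =>
    ⟨(hint y).mono_set Ioc_subset_Iic_self, (hint x).mono_set Ioc_subset_Iic_self⟩
  have hsub : ∀ x y, G y - G x = ∫ t in x..y, f t := fun x y => by
    rw [hG, hG]
    exact intervalIntegral.integral_Iic_sub_Iic (hint x) (hint y)
  refine ⟨?_, fun t ht => ?_, fun x hx y _ hxy => ?_, hG1⟩
  · have hprim : G = fun y => G 0 + ∫ t in (0 : ℝ)..y, f t := funext fun y => by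
      linarith [hsub 0 y]
    rw [hprim]
    exact continuous_const.add (intervalIntegral.continuous_primitive hii 0)
  · rw [hG, setIntegral_congr_fun measurableSet_Iic (g := fun _ => (0 : ℝ))
      fun s hs => hfzero s (le_trans hs ht)]
    simp
  · have hpos : 0 < ∫ t in x..y, f t :=
      intervalIntegral.intervalIntegral_pos_of_pos_on (hii x y)
        (fun t ht => hfpos t (lt_of_le_of_lt hx ht.1)) hxy
    linarith [hsub x y]

end Density

namespace IsPositiveCDF

variable {G : ℝ → ℝ} (hG : IsPositiveCDF G) {p t : ℝ}
include hG

theorem apply_max_zero (t : ℝ) : G (max t 0) = G t := by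
  rcases le_total t 0 with ht | ht
  · rw [max_eq_right ht, hG.eq_zero_of_nonpos t ht, hG.eq_zero_of_nonpos 0 le_rfl]
  · rw [max_eq_left ht]

theorem monotone : Monotone G := fun x y hxy => by
  rw [← hG.apply_max_zero x, ← hG.apply_max_zero y]
  exact hG.strictMonoOn.monotoneOn (mem_Ici.2 (le_max_right x 0))
    (mem_Ici.2 (le_max_right y 0)) (max_le_max_right 0 hxy)

theorem lt_one (t : ℝ) : G t < 1 :=
  calc G t = G (max t 0) := (hG.apply_max_zero t).symm
    _ < G (max t 0 + 1) := hG.strictMonoOn (mem_Ici.2 (le_max_right t 0))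
        (mem_Ici.2 (by positivity)) (lt_add_one _)
    _ ≤ 1 := hG.monotone.ge_of_tendsto hG.tendsto_atTop _

theorem pos (ht : 0 < t) : 0 < G t := by
  simpa [hG.eq_zero_of_nonpos 0 le_rfl] using hG.strictMonoOn (mem_Ici.2 le_rfl) ht.le ht

theorem pos_of_le_apply (hp : 0 < p) (ht : p ≤ G t) : 0 < t := by
  by_contra! h
  linarith [hG.eq_zero_of_nonpos t h]

theorem bddBelow_setOf_le_apply (hp : 0 < p) : BddBelow {t | p ≤ G t} :=
  ⟨0, fun _ ht => (hG.pos_of_le_apply hp ht).le⟩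

theorem quantile_le (hp : 0 < p) (ht : p ≤ G t) : quantile G p ≤ t :=
  csInf_le (hG.bddBelow_setOf_le_apply hp) ht

theorem le_apply_quantile (hp : p ∈ Ioo 0 1) : p ≤ G (quantile G p) := by
  have hne : {t | p ≤ G t}.Nonempty :=
    (hG.tendsto_atTop.eventually (eventually_ge_nhds hp.2)).exists
  exact (isClosed_Ici.preimage hG.continuous).csInf_mem hne (hG.bddBelow_setOf_le_apply hp.1)

theorem quantile_pos (hp : p ∈ Ioo 0 1) : 0 < quantile G p :=
  hG.pos_of_le_apply hp.1 (hG.le_apply_quantile hp)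

theorem apply_quantile (hp : p ∈ Ioo 0 1) : G (quantile G p) = p := by
  have hp_mem : p ∈ Icc (G 0) (G (quantile G p)) :=
    ⟨(hG.eq_zero_of_nonpos 0 le_rfl).trans_le hp.1.le, hG.le_apply_quantile hp⟩
  obtain ⟨s, hs, hGs⟩ := intermediate_value_Icc (hG.quantile_pos hp).le
    hG.continuous.continuousOn hp_mem
  have hqs : quantile G p ≤ s := hG.quantile_le hp.1 hGs.ge
  rwa [← le_antisymm hs.2 hqs]

theorem quantile_apply (ht : 0 < t) : quantile G (G t) = t := by
  have hGt : G t ∈ Ioo 0 1 := ⟨hG.pos ht, hG.lt_one t⟩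
  refine le_antisymm (hG.quantile_le hGt.1 le_rfl) (not_lt.1 fun hlt => ?_)
  have := hG.strictMonoOn (hG.quantile_pos hGt).le ht.le hlt
  rw [hG.apply_quantile hGt] at this
  exact this.false

theorem strictMonoOn_quantile : StrictMonoOn (quantile G) (Ioo 0 1) :=
  fun p hp p' hp' hpp' => not_le.1 fun hle => by
    have := hG.monotone hle
    rw [hG.apply_quantile hp, hG.apply_quantile hp'] at this
    linarith

theorem continuousOn_quantile : ContinuousOn (quantile G) (Ioo 0 1) := by
  intro p hp
  have himage : Ioi 0 ⊆ quantile G '' Ioo 0 1 := fun t ht =>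
    ⟨G t, ⟨hG.pos ht, hG.lt_one t⟩, hG.quantile_apply ht⟩
  exact (continuousAt_of_monotoneOn_of_image_mem_nhds hG.strictMonoOn_quantile.monotoneOn
    (isOpen_Ioo.mem_nhds hp)
    (mem_of_superset (Ioi_mem_nhds (hG.quantile_pos hp)) himage)).continuousWithinAt

theorem tendsto_quantile_nhdsLT_one : Tendsto (quantile G) (𝓝[<] 1) atTop := by
  refine Filter.tendsto_atTop.2 fun M => ?_
  filter_upwards [Ioo_mem_nhdsLT zero_lt_one, Ioo_mem_nhdsLT (hG.lt_one M)] with p hp hMp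
  by_contra! h
  have := hG.monotone h.le
  rw [hG.apply_quantile hp] at this
  linarith [hMp.1]

theorem tendsto_quantile_nhdsGT_zero : Tendsto (quantile G) (𝓝[>] 0) (𝓝 0) := by
  refine tendsto_order.2 ⟨fun m hm => ?_, fun M hM => ?_⟩
  · filter_upwards [Ioo_mem_nhdsGT zero_lt_one] with p hp
    exact hm.trans (hG.quantile_pos hp)
  · filter_upwards [Ioo_mem_nhdsGT (hG.pos (half_pos hM))] with p hp
    exact (hG.quantile_le hp.1 hp.2.le).trans_lt (half_lt_self hM)

end IsPositiveCDF

theorem StrictMonoOn.mapsTo_Ioo_of_tendsto {F : ℝ → ℝ} {a b l u : ℝ}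
    (hF : StrictMonoOn F (Ioo a b)) (ha : Tendsto F (𝓝[>] a) (𝓝 l))
    (hb : Tendsto F (𝓝[<] b) (𝓝 u)) : MapsTo F (Ioo a b) (Ioo l u) := by
  intro x hx
  obtain ⟨y, hay, hyx⟩ := exists_between hx.1
  obtain ⟨z, hxz, hzb⟩ := exists_between hx.2
  have hy : y ∈ Ioo a b := ⟨hay, hyx.trans hx.2⟩
  have hz : z ∈ Ioo a b := ⟨hx.1.trans hxz, hzb⟩
  have hly : l ≤ F y := le_of_tendsto ha <| by
    filter_upwards [Ioo_mem_nhdsGT hay] with w hw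
    exact (hF ⟨hw.1, hw.2.trans hy.2⟩ hy hw.2).le
  have hzu : F z ≤ u := ge_of_tendsto hb <| by
    filter_upwards [Ioo_mem_nhdsLT hzb] with w hw
    exact (hF hz ⟨hz.1.trans hw.1, hw.2⟩ hw.1).le
  exact ⟨hly.trans_lt (hF hy hx hyx), (hF hx hz hxz).trans_le hzu⟩

theorem hasDerivAt_integral_of_continuousOn {E : Type*} [NormedAddCommGroup E]
    [NormedSpace ℝ E] [CompleteSpace E] {g : ℝ → E} {s : Set ℝ} {c x : ℝ}
    (hg : ContinuousOn g s) (hs : IsOpen s) (hcx : uIcc c x ⊆ s) :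
    HasDerivAt (fun x => ∫ y in c..x, g y) (g x) x := by
  have hx : x ∈ s := hcx right_mem_uIcc
  exact intervalIntegral.integral_hasDerivAt_right ((hg.mono hcx).intervalIntegrable)
    (hg.stronglyMeasurableAtFilter hs x hx) (hg.continuousAt (hs.mem_nhds hx))

theorem utility_from_distribution_general
    (a b c : ℝ) (hab : a < b) (hc : c ∈ Set.Ioo a b)
    (F : ℝ → ℝ) (hFcont : ContinuousOn F (Set.Ioo a b))
    (hFsm : StrictMonoOn F (Set.Ioo a b))
    (hFa : Tendsto F (𝓝[>] a) (𝓝 0)) (hFb : Tendsto F (𝓝[<] b) (𝓝 1))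
    (fξ Fξ : ℝ → ℝ)
    (hfpos : ∀ t > (0:ℝ), 0 < fξ t) (hfzero : ∀ t ≤ (0:ℝ), fξ t = 0)
    (hFξ : ∀ x, Fξ x = ∫ t in Set.Iic x, fξ t)
    (hFξ1 : Tendsto Fξ atTop (𝓝 1))
    (q : ℝ → ℝ) (hq : ∀ p, q p = sInf {t : ℝ | p ≤ Fξ t})
    (U : ℝ → ℝ) (hU : ∀ x, U x = ∫ y in c..x, q (1 - F y)) :
    (∀ x ∈ Set.Ioo a b, HasDerivAt U (q (1 - F x)) x) ∧
    ContinuousOn (fun x => q (1 - F x)) (Set.Ioo a b) ∧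
    StrictMonoOn U (Set.Ioo a b) ∧
    StrictConcaveOn ℝ (Set.Ioo a b) U ∧
    Tendsto (fun x => q (1 - F x)) (𝓝[>] a) atTop ∧
    Tendsto (fun x => q (1 - F x)) (𝓝[<] b) (𝓝 0) := by
  have hξ : IsPositiveCDF Fξ := .of_density hFξ hfpos hfzero hFξ1
  obtain rfl : q = quantile Fξ := funext hq
  obtain rfl : U = fun x => ∫ y in c..x, quantile Fξ (1 - F y) := funext hU
  have hmaps : MapsTo (fun x => 1 - F x) (Ioo a b) (Ioo 0 1) := fun x hx => by
    obtain ⟨h0, h1⟩ := hFsm.mapsTo_Ioo_of_tendsto hFa hFb hx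
    constructor <;> linarith
  have hcont : ContinuousOn (fun x => quantile Fξ (1 - F x)) (Ioo a b) :=
    hξ.continuousOn_quantile.comp (continuousOn_const.sub hFcont) hmaps
  have hderiv : ∀ x ∈ Ioo a b, HasDerivAt _ (quantile Fξ (1 - F x)) x := fun x hx =>
    hasDerivAt_integral_of_continuousOn hcont isOpen_Ioo (ordConnected_Ioo.uIcc_subset hc hx)
  have hUcont : ContinuousOn _ (Ioo a b) := fun x hx =>
    (hderiv x hx).continuousAt.continuousWithinAt
  refine ⟨hderiv, hcont, ?_, ?_, ?_, ?_⟩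
  · rw [← interior_Ioo] at hderiv hmaps
    exact strictMonoOn_of_hasDerivWithinAt_pos (convex_Ioo a b) hUcont
      (fun x hx => (hderiv x hx).hasDerivWithinAt) fun x hx => hξ.quantile_pos (hmaps hx)
  · refine StrictAntiOn.strictConcaveOn_of_deriv (convex_Ioo a b) hUcont ?_
    rw [interior_Ioo]
    intro x hx y hy hxy
    rw [(hderiv x hx).deriv, (hderiv y hy).deriv]
    exact hξ.strictMonoOn_quantile (hmaps hy) (hmaps hx) (by linarith [hFsm hx hy hxy])
  · refine hξ.tendsto_quantile_nhdsLT_one.comp (tendsto_nhdsWithin_iff.2 ⟨?_, ?_⟩)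
    · simpa using (tendsto_const_nhds (x := (1 : ℝ))).sub hFa
    · exact Eventually.mono (Ioo_mem_nhdsGT hab) fun x hx => (hmaps hx).2
  · refine hξ.tendsto_quantile_nhdsGT_zero.comp (tendsto_nhdsWithin_iff.2 ⟨?_, ?_⟩)
    · simpa using (tendsto_const_nhds (x := (1 : ℝ))).sub hFb
    · exact Eventually.mono (Ioo_mem_nhdsLT hab) fun x hx => (hmaps hx).1

/-- The utility `U(x) = ∫_c^x F_ξ⁻¹(1 − F(y)) dy` built from a strictly
increasing continuous cdf `F` on `(a,b)` and the quantile function of a pricing kernel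
with positive density on `(0,∞)` is continuously differentiable, strictly increasing
and strictly concave on `(a,b)`, with `U' = F_ξ⁻¹(1 − F)`, `U'(a⁺) = +∞`, `U'(b⁻) = 0`. -/
theorem utility_from_distribution
    (a b c : ℝ) (hab : a < b) (hc : c ∈ Set.Ioo a b)
    (F : ℝ → ℝ) (hFcont : ContinuousOn F (Set.Ioo a b))
    (hFsm : StrictMonoOn F (Set.Ioo a b))
    (hFa : Tendsto F (𝓝[>] a) (𝓝 0)) (hFb : Tendsto F (𝓝[<] b) (𝓝 1))
    (hFc : 0 < F c)
    (fξ Fξ : ℝ → ℝ)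
    (hfpos : ∀ t > (0:ℝ), 0 < fξ t) (hfzero : ∀ t ≤ (0:ℝ), fξ t = 0)
    (hFξ : ∀ x, Fξ x = ∫ t in Set.Iic x, fξ t)
    (hFξ1 : Tendsto Fξ atTop (𝓝 1))
    (q : ℝ → ℝ) (hq : ∀ p, q p = sInf {t : ℝ | p ≤ Fξ t})
    (U : ℝ → ℝ) (hU : ∀ x, U x = ∫ y in c..x, q (1 - F y)) :
    (∀ x ∈ Set.Ioo a b, HasDerivAt U (q (1 - F x)) x) ∧
    ContinuousOn (fun x => q (1 - F x)) (Set.Ioo a b) ∧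
    StrictMonoOn U (Set.Ioo a b) ∧
    StrictConcaveOn ℝ (Set.Ioo a b) U ∧
    Tendsto (fun x => q (1 - F x)) (𝓝[>] a) atTop ∧
    Tendsto (fun x => q (1 - F x)) (𝓝[<] b) (𝓝 0) :=
  utility_from_distribution_general a b c hab hc F hFcont hFsm hFa hFb fξ Fξ hfpos hfzero hFξ hFξ1 q
    hq U hU
end

section
/- In a Black-Scholes market with pricing kernel ξ_T lognormal LN(−rT − θ²T/2, θ²T), an investor targeting a lognormal terminal wealth distribution F = LN(M, Σ²) has implied utility (via U'(x) = F_{ξ_T}^{-1}(1 − F(x))) given by the CRRA form: U'(x) = a·x^{−θ√T/Σ} with a = exp(MθâˆšT/Σ − rT − θ²T/2); in particular the relative risk aversion −xU''(x)/U'(x) equals θ√T/Σ for all x > 0. -/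
/-!
By the symmetry of the standard Gaussian, `Φ⁻¹(1 - Φ(z)) = -z`, so the pricing-kernel quantile of
`1 - F(x)` is the exponential of an affine function of `log x`, i.e. a constant times a power of `x`;
the relative risk aversion of `a x^(-k)` is the constant exponent `k`.
-/

open MeasureTheory ProbabilityTheory

open Set in
lemma gaussianReal_real_Iic_neg {v : NNReal} (hv : v ≠ 0) (z : ℝ) :
    (gaussianReal 0 v).real (Iic (-z)) = 1 - (gaussianReal 0 v).real (Iic z) := by
  have := nullSingletonClass_gaussianReal (μ := 0) hv
  calc (gaussianReal 0 v).real (Iic (-z))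
      = ((gaussianReal 0 v).map (fun x ↦ -x)).real (Iic (-z)) := by
        rw [gaussianReal_map_neg, neg_zero]
    _ = (gaussianReal 0 v).real (Iio z)ᶜ := by
        rw [map_measureReal_apply (by fun_prop) measurableSet_Iic, compl_Iio]
        congr 1
        ext x
        simp
    _ = 1 - (gaussianReal 0 v).real (Iio z) := probReal_compl_eq_one_sub measurableSet_Iio
    _ = 1 - (gaussianReal 0 v).real (Iic z) := by rw [measureReal_congr Iio_ae_eq_Iic]

lemma mul_deriv_const_mul_rpow_div {a x : ℝ} (p : ℝ) (ha : a ≠ 0) (hx : 0 < x) :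
    x * deriv (fun y : ℝ => a * y ^ p) x / (a * x ^ p) = p := by
  have hxp : x ^ p ≠ 0 := (Real.rpow_pos_of_pos hx p).ne'
  rw [deriv_const_mul _ (Real.differentiableAt_rpow_const_of_ne p hx.ne'),
    Real.deriv_rpow_const, Real.rpow_sub_one hx.ne']
  field_simp

theorem crra_from_lognormal_target_general
    (M Sg r T θ : ℝ)
    (Φ : ℝ → ℝ) (hΦ : ∀ x, Φ x = ((gaussianReal 0 1) (Set.Iic x)).toReal)
    (Φinv : ℝ → ℝ) (hΦinv : Function.LeftInverse Φinv Φ)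
    (F : ℝ → ℝ) (hF : ∀ x > (0:ℝ), F x = Φ ((Real.log x - M) / Sg))
    (q : ℝ → ℝ)
    (hq : ∀ y, q y = Real.exp (Φinv y * (θ * Real.sqrt T) - r * T - θ ^ 2 * T / 2))
    (k a : ℝ) (hk : k = θ * Real.sqrt T / Sg)
    (ha : a = Real.exp (M * θ * Real.sqrt T / Sg - r * T - θ ^ 2 * T / 2)) :
    (∀ x > (0:ℝ), q (1 - F x) = a * x ^ (-k)) ∧
    (∀ x > (0:ℝ),
      -x * deriv (fun y : ℝ => a * y ^ (-k)) x / (a * x ^ (-k)) = k) := by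
  have one_sub_Φ : ∀ z, 1 - Φ z = Φ (-z) := fun z => by
    simp only [hΦ, ← measureReal_def, gaussianReal_real_Iic_neg one_ne_zero]
  refine ⟨fun x hx => ?_, fun x hx => ?_⟩
  · rw [hF x hx, hq, one_sub_Φ, hΦinv, ha, Real.rpow_def_of_pos hx, ← Real.exp_add, hk]
    ring_nf
  · rw [neg_mul, neg_div, mul_deriv_const_mul_rpow_div _ (ha ▸ (Real.exp_pos _).ne') hx, neg_neg]

/-- In a Black-Scholes market, the implied marginal utility for a
lognormal target distribution `LN(M, Σ²)` is of CRRA form `a x^{−θ√T/Σ}`, and the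
relative risk aversion equals `θ√T/Σ` for all `x > 0`. -/
theorem crra_from_lognormal_target
    (M Sg r T θ : ℝ) (hSg : 0 < Sg) (hT : 0 < T)
    (Φ : ℝ → ℝ) (hΦ : ∀ x, Φ x = ((gaussianReal 0 1) (Set.Iic x)).toReal)
    (Φinv : ℝ → ℝ) (hΦinv : Function.LeftInverse Φinv Φ)
    (F : ℝ → ℝ) (hF : ∀ x > (0:ℝ), F x = Φ ((Real.log x - M) / Sg))
    (q : ℝ → ℝ)
    (hq : ∀ y, q y = Real.exp (Φinv y * (θ * Real.sqrt T) - r * T - θ ^ 2 * T / 2))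
    (k a : ℝ) (hk : k = θ * Real.sqrt T / Sg)
    (ha : a = Real.exp (M * θ * Real.sqrt T / Sg - r * T - θ ^ 2 * T / 2)) :
    (∀ x > (0:ℝ), q (1 - F x) = a * x ^ (-k)) ∧
    (∀ x > (0:ℝ),
      -x * deriv (fun y : ℝ => a * y ^ (-k)) x / (a * x ^ (-k)) = k) :=
  crra_from_lognormal_target_general M Sg r T θ Φ hΦ Φinv hΦinv F hF q hq k a hk ha
end

section
/- Let F be a twice differentiable cdf with right-bounded support (i.e., F(b) = 1 for some finite b) and G a cdf with positive density on all of ℝ. Then the function k(x) = F^{-1}(G(x)) cannot be strictly convex on ℝ; consequently an investor whose terminal wealth distribution has right-bounded support cannot exhibit (globally) decreasing absolute risk aversion. -/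
/-!
The quantile transform `k = F⁻¹ ∘ G` is bounded above by the right end `b` of the support of
`F`, because `G < 1 = F b` puts `b` in every set whose infimum defines `k`. A strictly convex
function on `ℝ` is never bounded above: it has a chord of nonzero slope, and by convexity it
grows at least linearly beyond that chord, to the right if the slope is positive and to the left
if it is negative.
-/

open Filter Set

section

variable {f : ℝ → ℝ} {a b : ℝ}

theorem ConvexOn.tendsto_atTop_atTop_of_lt (hf : ConvexOn ℝ univ f) (hab : a < b)
    (hfab : f a < f b) : Tendsto f atTop atTop := by
  set s := (f b - f a) / (b - a)
  have hs : 0 < s := div_pos (sub_pos.2 hfab) (sub_pos.2 hab)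
  have hline : Tendsto (fun x ↦ f b + s * (x - b)) atTop atTop :=
    tendsto_atTop_add_const_left _ _ <|
      (tendsto_atTop_add_const_right _ _ tendsto_id).const_mul_atTop hs
  refine tendsto_atTop_mono' _ ?_ hline
  filter_upwards [eventually_gt_atTop b] with x hbx
  have hslope := hf.slope_mono_adjacent (mem_univ a) (mem_univ x) hab hbx
  rw [le_div_iff₀ (sub_pos.2 hbx)] at hslope
  linarith

theorem ConvexOn.tendsto_atBot_atTop_of_gt (hf : ConvexOn ℝ univ f) (hab : a < b)
    (hfab : f b < f a) : Tendsto f atBot atTop := by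
  have hreflect := (hf.comp_affineMap (-.id ..)).subset (subset_univ _) convex_univ
  have := hreflect.tendsto_atTop_atTop_of_lt (neg_lt_neg hab) (by simpa using hfab)
  simpa [Function.comp_def] using this.comp tendsto_neg_atBot_atTop

theorem StrictConvexOn.not_bddAbove_range (hf : StrictConvexOn ℝ univ f) :
    ¬ BddAbove (range f) := by
  have hslope : f 1 - f 0 < f 2 - f 1 := by
    simpa [show (2 : ℝ) - 1 = 1 by norm_num] using
      hf.slope_strict_mono_adjacent (mem_univ 0) (mem_univ 2) (zero_lt_one' ℝ) one_lt_two
  rcases lt_or_ge (f 1) (f 2) with hup | hdown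
  · exact not_bddAbove_of_tendsto_atTop (hf.convexOn.tendsto_atTop_atTop_of_lt one_lt_two hup)
  · exact not_bddAbove_of_tendsto_atTop
      (hf.convexOn.tendsto_atBot_atTop_of_gt (zero_lt_one' ℝ) (by linarith))

end

theorem bddBelow_setOf_le_of_tendsto_atBot {α β : Type*} [LinearOrder α] [Nonempty α]
    [TopologicalSpace β] [LinearOrder β] [OrderTopology β] {F : α → β} {c y : β}
    (hF : Tendsto F atBot (nhds c)) (hy : c < y) : BddBelow {t | y ≤ F t} := by
  obtain ⟨a, ha⟩ := eventually_atBot.1 (hF.eventually (gt_mem_nhds hy))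
  exact ⟨a, fun t ht ↦ not_lt.1 fun hta ↦ (ha t hta.le).not_ge ht⟩

theorem no_dara_for_bounded_support_general
    (F G : ℝ → ℝ) (b : ℝ)
    (hFb : F b = 1)
    (hF0 : Tendsto F atBot (nhds 0))
    (hGrange : ∀ x, G x ∈ Set.Ioo (0:ℝ) 1)
    (k : ℝ → ℝ) (hk : ∀ x, k x = sInf {t : ℝ | G x ≤ F t}) :
    ¬ StrictConvexOn ℝ Set.univ k := by
  intro hconvex
  refine hconvex.not_bddAbove_range ⟨b, ?_⟩
  rintro _ ⟨x, rfl⟩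
  rw [hk x]
  exact csInf_le (bddBelow_setOf_le_of_tendsto_atBot hF0 (hGrange x).1)
    (by simpa [hFb] using (hGrange x).2.le)

/-- If the target distribution `F` has right-bounded support and `G`
is a cdf taking values in `(0,1)`, then `k(x) = F⁻¹(G(x))` cannot be strictly convex
on `ℝ`; hence no globally DARA investor demands a right-bounded distribution. -/
theorem no_dara_for_bounded_support
    (F G : ℝ → ℝ) (b : ℝ)
    (hFmono : Monotone F) (hFb : F b = 1)
    (hF0 : Tendsto F atBot (nhds 0))
    (hGmono : Monotone G) (hGrange : ∀ x, G x ∈ Set.Ioo (0:ℝ) 1)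
    (k : ℝ → ℝ) (hk : ∀ x, k x = sInf {t : ℝ | G x ≤ F t}) :
    ¬ StrictConvexOn ℝ Set.univ k :=
  no_dara_for_bounded_support_general F G b hFb hF0 hGrange k hk
end

section
/- Let X* = F^{-1}(1 − F_ξ(ξ)) where ξ is a positive random variable with continuous strictly increasing cdf F_ξ, and let W be any random variable with distribution F that is non-increasing in ξ (i.e., W = φ(ξ) a.s. for some non-increasing function φ). Then W = X* almost surely; that is, the cost-efficient payoff with a given distribution is almost surely unique. -/
open MeasureTheory Set Filter

/-- The cost-efficient payoff with a given distribution is a.s. unique: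
any payoff `W ∼ F` that is non-increasing in a continuously distributed positive `ξ`
coincides a.s. with `F⁻¹(1 − F_ξ(ξ))`. -/
theorem cost_efficient_unique
    {Ω : Type*} [MeasurableSpace Ω] (P : Measure Ω) [IsProbabilityMeasure P]
    (ξ W : Ω → ℝ) (hξm : Measurable ξ) (hWm : Measurable W) (hξpos : ∀ ω, 0 < ξ ω)
    (Fξ : ℝ → ℝ) (hFξ : ∀ x, Fξ x = (P {ω | ξ ω ≤ x}).toReal)
    (hFξcont : Continuous Fξ) (hFξsm : StrictMonoOn Fξ (Set.Ioi (0:ℝ)))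
    (F : ℝ → ℝ) (hWF : ∀ x, F x = (P {ω | W ω ≤ x}).toReal)
    (φ : ℝ → ℝ) (hφ : Antitone φ) (hWφ : ∀ᵐ ω ∂P, W ω = φ (ξ ω)) :
    ∀ᵐ ω ∂P, W ω = sInf {t : ℝ | 1 - Fξ (ξ ω) ≤ F t} := by
  -- monotonicity of the cdfs
  have Fmono : Monotone F := by
    intro a b hab
    rw [hWF a, hWF b]
    exact ENNReal.toReal_mono (measure_ne_top _ _)
      (measure_mono (fun ω h => le_trans h hab))
  have Fξmono : Monotone Fξ := by
    intro a b hab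
    rw [hFξ a, hFξ b]
    exact ENNReal.toReal_mono (measure_ne_top _ _)
      (measure_mono (fun ω h => le_trans h hab))
  -- singletons are null for ξ, by continuity of Fξ
  have hnull : ∀ x0 : ℝ, P {ω | ξ ω = x0} = 0 := by
    intro x0
    have htr : (P {ω | ξ ω = x0}).toReal = 0 := by
      by_contra hne
      have hpos : 0 < (P {ω | ξ ω = x0}).toReal :=
        lt_of_le_of_ne ENNReal.toReal_nonneg (Ne.symm hne)
      obtain ⟨δ, hδpos, hδ⟩ := Metric.continuousAt_iff.1 (hFξcont.continuousAt (x := x0))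
        _ hpos
      set y := x0 - δ / 2 with hy
      clear_value y
      have hdist : dist y x0 < δ := by
        simp only [hy, Real.dist_eq]
        rw [abs_of_nonpos (by linarith)]
        linarith
      have hlt : Fξ x0 - Fξ y < (P {ω | ξ ω = x0}).toReal := by
        have := hδ hdist
        rw [Real.dist_eq] at this
        have hle : Fξ y ≤ Fξ x0 := Fξmono (by linarith)
        rw [abs_of_nonpos (by linarith)] at this
        linarith
      -- but {ξ = x0} ⊆ {ξ ≤ x0} \ {ξ ≤ y}
      have hsub : {ω | ξ ω = x0} ⊆ {ω | ξ ω ≤ x0} \ {ω | ξ ω ≤ y} := by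
        intro ω hω
        simp only [Set.mem_setOf_eq] at hω
        constructor
        · exact le_of_eq hω
        · simp only [Set.mem_setOf_eq, not_le, hω]; linarith
      have h1 : P {ω | ξ ω = x0} ≤ P ({ω | ξ ω ≤ x0} \ {ω | ξ ω ≤ y}) :=
        measure_mono hsub
      have h2 : P ({ω | ξ ω ≤ x0} \ {ω | ξ ω ≤ y})
          = P {ω | ξ ω ≤ x0} - P {ω | ξ ω ≤ y} := by
        refine measure_diff (fun ω h => ?_) ?_ (measure_ne_top _ _)
        · simp only [Set.mem_setOf_eq] at h ⊢; linarith
        exact (hξm measurableSet_Iic).nullMeasurableSet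
      have h3 : (P {ω | ξ ω = x0}).toReal ≤ Fξ x0 - Fξ y := by
        rw [hFξ, hFξ]
        calc (P {ω | ξ ω = x0}).toReal
            ≤ (P ({ω | ξ ω ≤ x0} \ {ω | ξ ω ≤ y})).toReal :=
              ENNReal.toReal_mono (measure_ne_top _ _) h1
          _ = (P {ω | ξ ω ≤ x0}).toReal - (P {ω | ξ ω ≤ y}).toReal := by
              rw [h2]
              exact ENNReal.toReal_sub_of_le
                (measure_mono (fun ω h => by
                  simp only [Set.mem_setOf_eq] at h ⊢; linarith)) (measure_ne_top _ _)
      linarith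
    exact (ENNReal.toReal_eq_zero_iff _).1 htr |>.resolve_right (measure_ne_top _ _)
  -- for each real c, the set {Fξ ∘ ξ = c} is null
  have hlevelnull : ∀ c : ℝ, P {ω | Fξ (ξ ω) = c} = 0 := by
    intro c
    by_cases hex : ∃ x0 : ℝ, 0 < x0 ∧ Fξ x0 = c
    · obtain ⟨x0, hx0pos, hx0⟩ := hex
      refine measure_mono_null (fun ω hω => ?_) (hnull x0)
      simp only [Set.mem_setOf_eq] at hω ⊢
      exact hFξsm.injOn (hξpos ω) hx0pos (by rw [hω, hx0])
    · have : {ω | Fξ (ξ ω) = c} = ∅ := by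
        ext ω
        simp only [Set.mem_setOf_eq, Set.mem_empty_iff_false, iff_false]
        intro h
        exact hex ⟨ξ ω, hξpos ω, h⟩
      rw [this]; exact measure_empty
  have hratnull : ∀ᵐ ω ∂P, ∀ r : ℚ, Fξ (ξ ω) ≠ 1 - F r := by
    rw [ae_all_iff]
    intro r
    rw [ae_iff]
    simpa using hlevelnull (1 - F r)
  -- the two key cdf inequalities (hold for every ω given hWφ)
  have step1 : ∀ ω, 1 - Fξ (ξ ω) ≤ F (φ (ξ ω)) := by
    intro ω
    have hsub : ∀ᵐ ω' ∂P, ω' ∈ {ω' | W ω' ≤ φ (ξ ω)}ᶜ → ω' ∈ {ω' | ξ ω' ≤ ξ ω} := by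
      filter_upwards [hWφ] with ω' hW' h
      simp only [Set.mem_compl_iff, Set.mem_setOf_eq, not_le] at h ⊢
      by_contra hc
      push_neg at hc
      have : φ (ξ ω') ≤ φ (ξ ω) := hφ hc.le
      rw [← hW'] at this
      linarith
    have hmeas : P ({ω' | W ω' ≤ φ (ξ ω)}ᶜ) ≤ P {ω' | ξ ω' ≤ ξ ω} :=
      measure_mono_ae hsub
    have hcompl : P ({ω' | W ω' ≤ φ (ξ ω)}ᶜ) = 1 - P {ω' | W ω' ≤ φ (ξ ω)} :=
      prob_compl_eq_one_sub (hWm measurableSet_Iic)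
    rw [hcompl] at hmeas
    have h1 : (1 - P {ω' | W ω' ≤ φ (ξ ω)} : ENNReal).toReal
        = 1 - (P {ω' | W ω' ≤ φ (ξ ω)}).toReal := by
      rw [ENNReal.toReal_sub_of_le prob_le_one ENNReal.one_ne_top, ENNReal.toReal_one]
    have h2 : (1 - P {ω' | W ω' ≤ φ (ξ ω)} : ENNReal).toReal
        ≤ (P {ω' | ξ ω' ≤ ξ ω}).toReal :=
      ENNReal.toReal_mono (measure_ne_top _ _) hmeas
    rw [h1] at h2
    rw [hWF, hFξ]
    linarith
  have step2 : ∀ ω t, t < φ (ξ ω) → F t ≤ 1 - Fξ (ξ ω) := by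
    intro ω t ht
    have hsub : ∀ᵐ ω' ∂P, ω' ∈ {ω' | W ω' ≤ t} → ω' ∈ {ω' | ξ ω' ≤ ξ ω}ᶜ := by
      filter_upwards [hWφ] with ω' hW' h
      simp only [Set.mem_compl_iff, Set.mem_setOf_eq, not_le]
      by_contra hc
      push_neg at hc
      have : φ (ξ ω) ≤ φ (ξ ω') := hφ hc
      rw [← hW'] at this
      linarith
    have hmeas : P {ω' | W ω' ≤ t} ≤ P ({ω' | ξ ω' ≤ ξ ω}ᶜ) :=
      measure_mono_ae hsub
    have hcompl : P ({ω' | ξ ω' ≤ ξ ω}ᶜ) = 1 - P {ω' | ξ ω' ≤ ξ ω} :=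
      prob_compl_eq_one_sub (hξm measurableSet_Iic)
    rw [hcompl] at hmeas
    have h2 : (P {ω' | W ω' ≤ t}).toReal
        ≤ (1 - P {ω' | ξ ω' ≤ ξ ω} : ENNReal).toReal :=
      ENNReal.toReal_mono (by simp [ENNReal.sub_ne_top]) hmeas
    rw [ENNReal.toReal_sub_of_le prob_le_one ENNReal.one_ne_top, ENNReal.toReal_one] at h2
    rw [hWF, hFξ]
    linarith
  -- main a.e. argument
  filter_upwards [hWφ, hratnull] with ω hW hr
  set a := φ (ξ ω) with ha
  set p := 1 - Fξ (ξ ω) with hp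
  have hmemS : a ∈ {t : ℝ | p ≤ F t} := step1 ω
  have hlb : ∀ t ∈ {t : ℝ | p ≤ F t}, a ≤ t := by
    intro t ht
    by_contra hc
    push_neg at hc
    obtain ⟨r, hr1, hr2⟩ := exists_rat_btwn hc
    have h1 : p ≤ F r := le_trans ht (Fmono hr1.le)
    have h2 : F r ≤ p := step2 ω r hr2
    exact hr r (by linarith)
  rw [hW]
  exact (le_antisymm (le_csInf ⟨a, hmemS⟩ hlb) (csInf_le ⟨a, hlb⟩ hmemS))
end
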